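/- arXiv:2404.03828 — 2 statements merged into one kernel-verified Lean document; each statement's English description precedes it below -/
import Mathlib

section
/- Let (x_t)_{t ≥ 0} be any sequence in ℝ^d defined by the iteration x_{t+1} = T(x_t). Then the energy sequence H(x_t) converges, ‖x_{t+1} − x_t‖ → 0 as t → ∞, and every limit point x* of the sequence (x_t) is a fixed point of T (equivalently, a stationary point of H, i.e., ∇H(x*) = 0). -/
open Real Filter Topology
open scoped BigOperators RealInnerProductSpace

/-- `Softmax₁`: for `z ∈ ℝ^M`, `[Softmax₁(z)]_ν = exp(z_ν)/(1 + ∑_μ exp(z_μ))`. -/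
noncomputable def softmax1 {M : ℕ} (z : Fin M → ℝ) : Fin M → ℝ :=
  fun ν => Real.exp (z ν) / (1 + ∑ μ, Real.exp (z μ))

/-!
`lse₁` is convex with gradient `T`, so its first-order convexity inequality
`⟪T x, y - x⟫ ≤ lse₁ y - lse₁ x` at `y = T x` gives the descent estimate
`H (T x) + ‖T x - x‖² / 2 ≤ H x`. That inequality is Jensen's inequality for `exp`, with the
softmax weights completed to a probability vector by the weight of the constant `1`.
Since `H x ≥ ‖x‖² / 2 - (∑ ‖ξ_μ‖) ‖x‖ - β⁻¹ log (1 + M)` is bounded below, the energies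
decrease to a limit and the squared steps, bounded by twice the energy gaps, tend to `0`.
A cluster point is then fixed by the continuous map `T`, and `∇H x = x - T x`.
-/

open Finset

theorem Real.sum_mul_le_log_sum_mul_exp {ι : Type*} {s : Finset ι} {w : ι → ℝ} (b : ι → ℝ)
    (hw₀ : ∀ i ∈ s, 0 ≤ w i) (hw₁ : ∑ i ∈ s, w i = 1) :
    ∑ i ∈ s, w i * b i ≤ log (∑ i ∈ s, w i * exp (b i)) := by
  have hJensen : exp (∑ i ∈ s, w i * b i) ≤ ∑ i ∈ s, w i * exp (b i) := by
    simpa using convexOn_exp.map_sum_le hw₀ hw₁ (fun i _ => Set.mem_univ (b i))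
  rw [← exp_le_exp, exp_log ((exp_pos _).trans_le hJensen)]
  exact hJensen

theorem sum_softmax1_mul_le_log_sub {M : ℕ} (a b : Fin M → ℝ) :
    ∑ μ, softmax1 a μ * b μ ≤ log (1 + ∑ μ, exp (a μ + b μ)) - log (1 + ∑ μ, exp (a μ)) := by
  set Z := 1 + ∑ μ, exp (a μ) with hZ
  have hZpos : 0 < Z := by positivity
  -- The extra state `none` carries the weight `Z⁻¹` of the constant `1` in `Z`, and `b none = 0`.
  have hJensen := Real.sum_mul_le_log_sum_mul_exp (s := univ)
    (w := fun o : Option (Fin M) => o.elim Z⁻¹ (softmax1 a)) (fun o => o.elim 0 b)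
    (fun o _ => by cases o <;> simp only [Option.elim, softmax1] <;> positivity)
    (by simp only [Fintype.sum_option, Option.elim, softmax1, ← sum_div]; field_simp; ring)
  simp only [Fintype.sum_option, Option.elim, mul_zero, zero_add, exp_zero, mul_one] at hJensen
  convert hJensen using 1
  rw [← log_div (by positivity) hZpos.ne']
  congr 1
  simp only [softmax1, exp_add, div_mul_eq_mul_div, ← sum_div]
  field_simp
  rw [hZ]; ring

section Hopfield

variable {E : Type*} [NormedAddCommGroup E] [InnerProductSpace ℝ E] {M : ℕ} {β : ℝ}

noncomputable def lse1 (β : ℝ) (ξ : Fin M → E) (x : E) : ℝ :=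
  β⁻¹ * log (1 + ∑ μ, exp (β * ⟪ξ μ, x⟫))

noncomputable def hopfieldEnergy (β : ℝ) (ξ : Fin M → E) (x : E) : ℝ :=
  -lse1 β ξ x + (1/2) * ⟪x, x⟫

noncomputable def hopfieldRetrieval (β : ℝ) (ξ : Fin M → E) (x : E) : E :=
  ∑ μ, softmax1 (fun ν => β * ⟪ξ ν, x⟫) μ • ξ μ

theorem inner_hopfieldRetrieval_sub_le (hβ : 0 < β) (ξ : Fin M → E) (x y : E) :
    ⟪hopfieldRetrieval β ξ x, y - x⟫ ≤ lse1 β ξ y - lse1 β ξ x := by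
  have hlse := sum_softmax1_mul_le_log_sub (fun μ => β * ⟪ξ μ, x⟫) (fun μ => β * ⟪ξ μ, y - x⟫)
  simp only [← mul_add, ← inner_add_right, add_sub_cancel] at hlse
  have hinner : ⟪hopfieldRetrieval β ξ x, y - x⟫ =
      β⁻¹ * ∑ μ, softmax1 (fun ν => β * ⟪ξ ν, x⟫) μ * (β * ⟪ξ μ, y - x⟫) := by
    simp only [hopfieldRetrieval, sum_inner, real_inner_smul_left, mul_sum]
    congr! 1 with μ
    field_simp
  rw [hinner, lse1, lse1, ← mul_sub]
  exact mul_le_mul_of_nonneg_left hlse (inv_nonneg.2 hβ.le)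

theorem hopfieldEnergy_retrieval_add_le (hβ : 0 < β) (ξ : Fin M → E) (x : E) :
    hopfieldEnergy β ξ (hopfieldRetrieval β ξ x) + ‖hopfieldRetrieval β ξ x - x‖ ^ 2 / 2 ≤
      hopfieldEnergy β ξ x := by
  have h := inner_hopfieldRetrieval_sub_le hβ ξ x (hopfieldRetrieval β ξ x)
  rw [inner_sub_right, real_inner_self_eq_norm_sq] at h
  simp only [hopfieldEnergy, real_inner_self_eq_norm_sq, norm_sub_sq_real]
  linarith

theorem lse1_le (hβ : 0 < β) (ξ : Fin M → E) (x : E) :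
    lse1 β ξ x ≤ β⁻¹ * log (1 + M) + (∑ μ, ‖ξ μ‖) * ‖x‖ := by
  set C := ∑ μ, ‖ξ μ‖
  have hexp (μ : Fin M) : exp (β * ⟪ξ μ, x⟫) ≤ exp (β * (C * ‖x‖)) := by
    gcongr
    calc ⟪ξ μ, x⟫ ≤ ‖ξ μ‖ * ‖x‖ := real_inner_le_norm _ _
      _ ≤ C * ‖x‖ := by
        gcongr
        exact single_le_sum (fun ν _ => norm_nonneg (ξ ν)) (mem_univ μ)
  have hsum : 1 + ∑ μ, exp (β * ⟪ξ μ, x⟫) ≤ (1 + M) * exp (β * (C * ‖x‖)) := by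
    have h1 : 1 ≤ exp (β * (C * ‖x‖)) := one_le_exp (by positivity)
    have h2 := sum_le_sum fun μ (_ : μ ∈ univ) => hexp μ
    simp only [sum_const, card_univ, Fintype.card_fin, nsmul_eq_mul] at h2
    linarith
  have hlog : log (1 + ∑ μ, exp (β * ⟪ξ μ, x⟫)) ≤ log (1 + M) + β * (C * ‖x‖) := by
    rw [← log_exp (β * (C * ‖x‖)), ← log_mul (by positivity) (exp_pos _).ne']
    exact log_le_log (by positivity) hsum
  calc lse1 β ξ x ≤ β⁻¹ * (log (1 + M) + β * (C * ‖x‖)) :=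
        mul_le_mul_of_nonneg_left hlog (inv_nonneg.2 hβ.le)
    _ = β⁻¹ * log (1 + M) + C * ‖x‖ := by field_simp

theorem bddBelow_range_hopfieldEnergy (hβ : 0 < β) (ξ : Fin M → E) :
    BddBelow (Set.range (hopfieldEnergy β ξ)) := by
  refine ⟨-(β⁻¹ * log (1 + M)) - (∑ μ, ‖ξ μ‖) ^ 2 / 2, ?_⟩
  rintro _ ⟨x, rfl⟩
  have := lse1_le hβ ξ x
  rw [hopfieldEnergy, real_inner_self_eq_norm_sq]
  nlinarith [sq_nonneg (‖x‖ - ∑ μ, ‖ξ μ‖)]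

theorem continuous_hopfieldRetrieval (β : ℝ) (ξ : Fin M → E) :
    Continuous (hopfieldRetrieval β ξ) := by
  unfold hopfieldRetrieval softmax1
  fun_prop (disch := intro x; positivity)

theorem hasFDerivAt_lse1 (hβ : β ≠ 0) (ξ : Fin M → E) (x : E) :
    HasFDerivAt (lse1 β ξ) (innerSL ℝ (hopfieldRetrieval β ξ x)) x := by
  have hZ : HasFDerivAt (fun y => 1 + ∑ μ, exp (β * ⟪ξ μ, y⟫))
      (∑ μ, exp (β * ⟪ξ μ, x⟫) • β • innerSL ℝ (ξ μ)) x :=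
    (HasFDerivAt.fun_sum fun μ _ =>
      (((innerSL ℝ (ξ μ)).hasFDerivAt).const_mul β).exp).const_add 1
  refine ((hZ.log (by positivity)).const_mul β⁻¹).congr_fderiv ?_
  simp only [hopfieldRetrieval, map_sum, smul_sum]
  refine sum_congr rfl fun μ _ => ?_
  ext v
  simp only [map_smul, smul_apply, innerSL_apply_apply, smul_eq_mul, softmax1]
  field_simp

theorem hasGradientAt_hopfieldEnergy [CompleteSpace E] (hβ : β ≠ 0) (ξ : Fin M → E) (x : E) :
    HasGradientAt (hopfieldEnergy β ξ) (x - hopfieldRetrieval β ξ x) x := by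
  have hE : hopfieldEnergy β ξ = fun y => -lse1 β ξ y + (1/2) * ‖y‖ ^ 2 := by
    ext y; rw [hopfieldEnergy, real_inner_self_eq_norm_sq]
  rw [hasGradientAt_iff_hasFDerivAt, hE]
  refine ((hasFDerivAt_lse1 hβ ξ x).neg.add
    ((hasStrictFDerivAt_norm_sq x).hasFDerivAt.const_mul (1/2))).congr_fderiv ?_
  ext v
  simp only [one_div, add_apply, neg_apply, coe_innerSL_apply, smul_apply, nsmul_eq_mul,
    Nat.cast_ofNat, smul_eq_mul, ne_eq, OfNat.ofNat_ne_zero, not_false_eq_true,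
    inv_mul_cancel_left₀, map_sub, sub_apply, InnerProductSpace.toDual_apply_apply]
  ring

end Hopfield

section SufficientDecrease

variable {E : Type*} [NormedAddCommGroup E] {u : ℕ → ℝ} {xs : ℕ → E} {c : ℝ}

theorem antitone_of_sufficient_decrease (hc : 0 ≤ c)
    (hdec : ∀ t, u (t + 1) + c * ‖xs (t + 1) - xs t‖ ^ 2 ≤ u t) : Antitone u :=
  antitone_nat_of_succ_le fun t => by nlinarith [hdec t, sq_nonneg ‖xs (t + 1) - xs t‖]

theorem tendsto_norm_sub_of_sufficient_decrease (hc : 0 < c) (hu : BddBelow (Set.range u))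
    (hdec : ∀ t, u (t + 1) + c * ‖xs (t + 1) - xs t‖ ^ 2 ≤ u t) :
    Tendsto (fun t => ‖xs (t + 1) - xs t‖) atTop (𝓝 0) := by
  have hu_lim := tendsto_atTop_ciInf (antitone_of_sufficient_decrease hc.le hdec) hu
  have hgap : Tendsto (fun t => (u t - u (t + 1)) / c) atTop (𝓝 0) := by
    simpa using (hu_lim.sub (hu_lim.comp (tendsto_add_atTop_nat 1))).div_const c
  have hsq : Tendsto (fun t => ‖xs (t + 1) - xs t‖ ^ 2) atTop (𝓝 0) :=
    squeeze_zero (fun t => sq_nonneg _)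
      (fun t => by rw [le_div_iff₀ hc]; linarith [hdec t]) hgap
  simpa [Real.sqrt_sq (norm_nonneg _)] using hsq.sqrt

end SufficientDecrease

theorem MapClusterPt.apply_eq_self_of_tendsto_sub {E : Type*} [TopologicalSpace E] [AddGroup E]
    [IsTopologicalAddGroup E] [T2Space E] {T : E → E} {xs : ℕ → E} {x : E}
    (hT : ContinuousAt T x) (hxs : ∀ t, xs (t + 1) = T (xs t))
    (hstep : Tendsto (fun t => xs (t + 1) - xs t) atTop (𝓝 0)) (hx : MapClusterPt x atTop xs) :
    T x = x := by
  have hcluster : MapClusterPt (T x - x) atTop (fun t => xs (t + 1) - xs t) := by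
    simp only [hxs]
    exact hx.continuousAt_comp (hT.sub continuousAt_id)
  exact sub_eq_zero.1 (eq_of_nhds_neBot (hcluster.clusterPt.mono hstep))

/-- Let `(x_t)` be any sequence with `x_{t+1} = T(x_t)`. Then the energy sequence
`H(x_t)` converges, `‖x_{t+1} − x_t‖ → 0`, and every limit point `x*` of `(x_t)` is a
fixed point of `T` (equivalently a stationary point of `H`, i.e. `∇H(x*) = 0`). -/
theorem stmt5 (d M : ℕ) (β : ℝ) (hβ : 0 < β)
    (ξ : Fin M → EuclideanSpace ℝ (Fin d))
    (H : EuclideanSpace ℝ (Fin d) → ℝ)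
    (hH : ∀ x, H x = -(β⁻¹ * Real.log (1 + ∑ μ, Real.exp (β * ⟪ξ μ, x⟫)))
      + (1/2) * ⟪x, x⟫)
    (T : EuclideanSpace ℝ (Fin d) → EuclideanSpace ℝ (Fin d))
    (hT : ∀ x, T x = ∑ μ, softmax1 (fun ν => β * ⟪ξ ν, x⟫) μ • ξ μ)
    (xs : ℕ → EuclideanSpace ℝ (Fin d))
    (hxs : ∀ t, xs (t + 1) = T (xs t)) :
    (∃ L : ℝ, Tendsto (fun t => H (xs t)) atTop (𝓝 L)) ∧
    Tendsto (fun t => ‖xs (t + 1) - xs t‖) atTop (𝓝 0) ∧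
    ∀ xstar : EuclideanSpace ℝ (Fin d), MapClusterPt xstar atTop xs →
      T xstar = xstar ∧ gradient H xstar = 0 := by
  obtain rfl : H = hopfieldEnergy β ξ := funext hH
  obtain rfl : T = hopfieldRetrieval β ξ := funext hT
  have hdec (t : ℕ) : hopfieldEnergy β ξ (xs (t + 1)) + 2⁻¹ * ‖xs (t + 1) - xs t‖ ^ 2 ≤
      hopfieldEnergy β ξ (xs t) := by
    rw [hxs, inv_mul_eq_div]
    exact hopfieldEnergy_retrieval_add_le hβ ξ (xs t)
  have hbdd : BddBelow (Set.range fun t => hopfieldEnergy β ξ (xs t)) :=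
    (bddBelow_range_hopfieldEnergy hβ ξ).mono <|
      Set.range_subset_iff.2 fun t => Set.mem_range_self (xs t)
  have hstep := tendsto_norm_sub_of_sufficient_decrease (by norm_num) hbdd hdec
  refine ⟨⟨_, tendsto_atTop_ciInf (antitone_of_sufficient_decrease (by norm_num) hdec) hbdd⟩,
    hstep, fun xstar hxstar => ?_⟩
  have hfix := hxstar.apply_eq_self_of_tendsto_sub (continuous_hopfieldRetrieval β ξ).continuousAt
    hxs (tendsto_zero_iff_norm_tendsto_zero.2 hstep)
  refine ⟨hfix, ?_⟩
  rw [(hasGradientAt_hopfieldEnergy hβ.ne' ξ xstar).gradient, hfix, sub_self]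
end

section
/- For all vectors x, y ∈ ℝ^M, Softmax₁ satisfies the ℓ₁–ℓ∞ Lipschitz bound ∑_{i=1}^M |[Softmax₁(x)]_i − [Softmax₁(y)]_i| ≤ 2 · max_{i ∈ [M]} |x_i − y_i|. -/
/-!
If `|x i - y i| ≤ t` for all `i`, every numerator `exp (x i)` and the normaliser
`1 + ∑ exp (x μ)` change by a factor of at most `exp t`, so each entry of `Softmax₁`
changes by a factor in `[exp (-2t), exp (2t)]`. Two sub-probability vectors whose entries
agree up to a factor `c ≤ 1` in both directions are `2 (1 - c) / (1 + c)`-close in `ℓ₁`;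
for `c = exp (-2t)` this is `2 tanh t ≤ 2 t`.
-/

open Real
open scoped BigOperators

namespace Real

theorem sinh_le_mul_cosh {t : ℝ} (ht : 0 ≤ t) : sinh t ≤ t * cosh t := by
  have hderiv : ∀ s, HasDerivAt (fun s => s * cosh s - sinh s) (s * sinh s) s := fun s =>
    (((hasDerivAt_id' s).mul (hasDerivAt_cosh s)).sub (hasDerivAt_sinh s)).congr_deriv (by ring)
  have hmono : MonotoneOn (fun s => s * cosh s - sinh s) (Set.Ici 0) :=
    monotoneOn_of_hasDerivWithinAt_nonneg (convex_Ici 0)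
      (fun s _ => (hderiv s).continuousAt.continuousWithinAt)
      (fun s _ => (hderiv s).hasDerivWithinAt)
      (fun s hs => by
        rw [interior_Ici] at hs
        exact mul_nonneg (le_of_lt hs) (sinh_nonneg_iff.mpr (le_of_lt hs)))
  simpa using hmono Set.self_mem_Ici ht ht

theorem tanh_le_self {t : ℝ} (ht : 0 ≤ t) : tanh t ≤ t := by
  rw [tanh_eq_sinh_div_cosh, div_le_iff₀ (cosh_pos t)]
  exact sinh_le_mul_cosh ht

theorem tanh_eq_one_sub_exp_div (t : ℝ) :
    tanh t = (1 - exp (-(2 * t))) / (1 + exp (-(2 * t))) := by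
  rw [tanh_eq, show exp (-(2 * t)) = exp (-t) / exp t by rw [← exp_sub]; ring_nf]
  field_simp

end Real

theorem sum_abs_sub_le_of_mul_le {ι : Type*} [Fintype ι] {p q : ι → ℝ} {c : ℝ}
    (hc₀ : 0 ≤ c) (hc₁ : c ≤ 1) (hp : ∀ i, 0 ≤ p i) (hq : ∀ i, 0 ≤ q i)
    (hp1 : ∑ i, p i ≤ 1) (hq1 : ∑ i, q i ≤ 1)
    (hpq : ∀ i, c * p i ≤ q i) (hqp : ∀ i, c * q i ≤ p i) :
    ∑ i, |p i - q i| ≤ 2 * (1 - c) / (1 + c) := by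
  set S := ∑ i, |p i - q i|
  -- `|p - q| ≤ (1 - c) max p q`, and `2 max p q = p + q + |p - q|`
  have hpt : ∀ i, 2 * |p i - q i| ≤ (1 - c) * (p i + q i + |p i - q i|) := fun i => by
    have := hpq i; have := hqp i; have := hp i; have := hq i
    rcases abs_cases (p i - q i) with ⟨he, _⟩ | ⟨he, _⟩ <;> rw [he] <;> nlinarith
  have hsum : 2 * S ≤ (1 - c) * (2 + S) := calc
    2 * S = ∑ i, 2 * |p i - q i| := Finset.mul_sum ..
    _ ≤ ∑ i, (1 - c) * (p i + q i + |p i - q i|) := Finset.sum_le_sum fun i _ => hpt i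
    _ = (1 - c) * (∑ i, p i + ∑ i, q i + S) := by
      rw [← Finset.mul_sum, Finset.sum_add_distrib, Finset.sum_add_distrib]
    _ ≤ (1 - c) * (2 + S) := by gcongr; linarith
  rw [le_div_iff₀ (by linarith)]
  linarith

theorem exp_neg_two_mul_mul_softmax1_le {M : ℕ} {x y : Fin M → ℝ} {t : ℝ}
    (h : ∀ i, |x i - y i| ≤ t) (i : Fin M) :
    exp (-(2 * t)) * softmax1 x i ≤ softmax1 y i := by
  have hZy : 0 < 1 + ∑ μ, exp (y μ) := by positivity
  have hnum : exp (-t) * exp (x i) ≤ exp (y i) := by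
    rw [← exp_add, exp_le_exp]
    linarith [(abs_le.mp (h i)).2]
  have hden : 1 + ∑ μ, exp (y μ) ≤ exp t * (1 + ∑ μ, exp (x μ)) := calc
    1 + ∑ μ, exp (y μ) ≤ 1 + ∑ μ, exp t * exp (x μ) := by
      gcongr with μ
      rw [← exp_add, exp_le_exp]
      linarith [(abs_le.mp (h μ)).1]
    _ ≤ exp t * (1 + ∑ μ, exp (x μ)) := by
      rw [← Finset.mul_sum, mul_add, mul_one]
      gcongr
      exact one_le_exp (le_trans (abs_nonneg _) (h i))
  calc exp (-(2 * t)) * softmax1 x i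
      = exp (-t) * exp (x i) / (exp t * (1 + ∑ μ, exp (x μ))) := by
        rw [softmax1, show exp (-(2 * t)) = exp (-t) / exp t by rw [← exp_sub]; ring_nf,
          div_mul_div_comm]
    _ ≤ exp (y i) / (1 + ∑ μ, exp (y μ)) := div_le_div₀ (exp_pos _).le hnum hZy hden

theorem softmax1_nonneg {M : ℕ} (z : Fin M → ℝ) (i : Fin M) : 0 ≤ softmax1 z i := by
  unfold softmax1; positivity

theorem sum_softmax1_le_one {M : ℕ} (z : Fin M → ℝ) : ∑ i, softmax1 z i ≤ 1 := by
  have hZ : 0 < 1 + ∑ μ, exp (z μ) := by positivity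
  simp only [softmax1]
  rw [← Finset.sum_div, div_le_one hZ]
  linarith

/-- For all `x, y ∈ ℝ^M`, `Softmax₁` satisfies the `ℓ₁`–`ℓ∞` Lipschitz bound
`∑_i |[Softmax₁(x)]_i − [Softmax₁(y)]_i| ≤ 2 · max_i |x_i − y_i|`. -/
theorem stmt15 (M : ℕ) (hM : 0 < M) (x y : Fin M → ℝ) :
    ∑ i, |softmax1 x i - softmax1 y i| ≤
      2 * Finset.univ.sup' (Finset.univ_nonempty_iff.mpr ⟨⟨0, hM⟩⟩)
        (fun i => |x i - y i|) := by
  set t := Finset.univ.sup' (Finset.univ_nonempty_iff.mpr ⟨⟨0, hM⟩⟩) fun i => |x i - y i|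
  have hxy : ∀ i, |x i - y i| ≤ t := fun i =>
    Finset.le_sup' (fun i => |x i - y i|) (Finset.mem_univ i)
  have hyx : ∀ i, |y i - x i| ≤ t := fun i => abs_sub_comm (x i) (y i) ▸ hxy i
  have ht : 0 ≤ t := (abs_nonneg _).trans (hxy ⟨0, hM⟩)
  calc ∑ i, |softmax1 x i - softmax1 y i|
      ≤ 2 * (1 - exp (-(2 * t))) / (1 + exp (-(2 * t))) :=
        sum_abs_sub_le_of_mul_le (exp_pos _).le (exp_le_one_iff.mpr (by linarith))
          (softmax1_nonneg x) (softmax1_nonneg y) (sum_softmax1_le_one x) (sum_softmax1_le_one y)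
          (exp_neg_two_mul_mul_softmax1_le hxy) (exp_neg_two_mul_mul_softmax1_le hyx)
    _ = 2 * tanh t := by rw [tanh_eq_one_sub_exp_div, mul_div_assoc]
    _ ≤ 2 * t := by gcongr; exact tanh_le_self ht
end
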